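/- arXiv:2308.06126 — 2 statements merged into one kernel-verified Lean document; each statement's English description precedes it below -/
import Mathlib

section
/- Let Z_1, Z_2, … be i.i.d. standard normal random variables, m ≥ 1 an integer, and define M := Z_1²/Σ_{t=1}^∞ t^{-2}Z_t² and M̃ := Z_1²/Σ_{t=1}^m t^{-2}Z_t². Then 0 ≤ E[M̃ - M] ≤ 9·E[Σ_{t=m+1}^∞ t^{-2}Z_t²]·E[(Z_1²+Z_2²+Z_3²)^{-1}], and in particular E[M̃ - M] ≤ C/m for an absolute constant C. -/
/-!
Write `S_m`, `S` for the truncated and the full series and `R = S - S_m` for the tail. Then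
`M̃ - M = Z₁² R / (S_m S) ≤ R / S ≤ 9 R / (Z₁² + Z₂² + Z₃²)`, because `Z₁² ≤ S_m` and
`S ≥ Z₁² + Z₂² / 4 + Z₃² / 9`. For `m ≥ 3` the tail `R` is independent of `Z₁, Z₂, Z₃`, so the
expectation of the right-hand side factorises. For `m ≤ 2` one uses `M̃ - M ≤ 1` instead, together
with `E[R] ≥ 1/3` and `E[(Z₁² + Z₂² + Z₃²)⁻¹] ≥ 1/3` (Jensen). That last expectation is finite
because `P(Z₁² + Z₂² + Z₃² < δ²) ≤ (2δ)³`, and `E[R] = ∑_{t > m} t⁻² ≤ 1/m` gives the `C/m` bound.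
-/

open MeasureTheory ProbabilityTheory Finset
open scoped ENNReal NNReal ProbabilityTheory

theorem div_sub_div_le_sub_div {x A B : ℝ} (hx : 0 ≤ x) (hxA : x ≤ A) (hAB : A ≤ B) :
    x / A - x / B ≤ (B - A) / B := by
  rcases (hx.trans hxA).eq_or_lt with rfl | hA
  · obtain rfl : x = 0 := le_antisymm hxA hx
    simpa using div_nonneg hAB hAB
  · have hB : 0 < B := hA.trans_le hAB
    rw [div_sub_div _ _ hA.ne' hB.ne', div_le_div_iff₀ (by positivity) hB]
    nlinarith [mul_le_mul_of_nonneg_right hxA (sub_nonneg.2 hAB)]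

/-- The tangent line of `x ↦ x⁻¹` at `x = 3`. -/
theorem two_thirds_sub_div_nine_le_inv {x : ℝ} (hx : 0 < x) : 2 / 3 - x / 9 ≤ x⁻¹ := by
  have h : x⁻¹ - (2 / 3 - x / 9) = (x - 3) ^ 2 / (9 * x) := by
    field_simp
    ring
  linarith [show 0 ≤ (x - 3) ^ 2 / (9 * x) by positivity]

theorem summable_ite_tail {a : ℕ → ℝ} (hs : Summable a) (m : ℕ) :
    Summable fun t => if m + 1 ≤ t then a t else 0 :=
  (hs.indicator {t | m + 1 ≤ t}).congr fun t => by simp [Set.indicator_apply]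

theorem sum_Icc_add_tsum_tail {a : ℕ → ℝ} (ha0 : a 0 = 0) (hs : Summable a) (m : ℕ) :
    ∑ t ∈ Icc 1 m, a t + ∑' t, (if m + 1 ≤ t then a t else 0) = ∑' t, a t := by
  have hsplit : ∀ t, (Icc 1 m : Set ℕ).indicator a t + (if m + 1 ≤ t then a t else 0)
      = a t := by
    intro t
    rcases Nat.eq_zero_or_pos t with rfl | ht
    · simp [ha0]
    by_cases htm : t ≤ m
    · simp [Set.indicator, Nat.one_le_iff_ne_zero.2 ht.ne', htm, show ¬ m + 1 ≤ t by omega]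
    · simp [Set.indicator, htm, show m + 1 ≤ t by omega]
  rw [sum_eq_tsum_indicator, ← (hs.indicator _).tsum_add (summable_ite_tail hs m),
    tsum_congr hsplit]

theorem summable_inv_sq : Summable fun t : ℕ => ((t : ℝ) ^ 2)⁻¹ :=
  Real.summable_nat_pow_inv.2 one_lt_two

theorem tsum_inv_sq_tail_le {m : ℕ} (hm : m ≠ 0) :
    ∑' t : ℕ, (if m + 1 ≤ t then ((t : ℝ) ^ 2)⁻¹ else 0) ≤ (m : ℝ)⁻¹ := by
  refine (summable_ite_tail summable_inv_sq m).tsum_le_of_sum_le fun u => ?_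
  set n := max m (u.sup id)
  calc ∑ t ∈ u, (if m + 1 ≤ t then ((t : ℝ) ^ 2)⁻¹ else 0)
      = ∑ t ∈ u with m + 1 ≤ t, ((t : ℝ) ^ 2)⁻¹ := (sum_filter _ _).symm
    _ ≤ ∑ t ∈ Ioc m n, ((t : ℝ) ^ 2)⁻¹ := by
      refine sum_le_sum_of_subset_of_nonneg (fun t ht => ?_) fun t _ _ => by positivity
      rw [mem_filter] at ht
      exact mem_Ioc.2 ⟨ht.2, (le_sup (f := id) ht.1).trans (le_max_right _ _)⟩
    _ ≤ (m : ℝ)⁻¹ - (n : ℝ)⁻¹ := sum_Ioc_inv_sq_le_sub hm (le_max_left _ _)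
    _ ≤ (m : ℝ)⁻¹ := sub_le_self _ (by positivity)

/-- Uses `∑ 1/t² = π²/6`; `1 + 1/4 + 1/3 < π²/6` needs `π² > 9.5`. -/
theorem one_third_le_tsum_inv_sq_tail {m : ℕ} (hm : m ≤ 2) :
    1 / 3 ≤ ∑' t : ℕ, (if m + 1 ≤ t then ((t : ℝ) ^ 2)⁻¹ else 0) := by
  have h := sum_Icc_add_tsum_tail (a := fun t : ℕ => ((t : ℝ) ^ 2)⁻¹) (by simp) summable_inv_sq m
  have hzeta : HasSum (fun t : ℕ => ((t : ℝ) ^ 2)⁻¹) (Real.pi ^ 2 / 6) := by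
    simpa only [one_div] using hasSum_zeta_two
  rw [hzeta.tsum_eq] at h
  have hpi := Real.pi_gt_d2
  interval_cases m <;> norm_num [Finset.sum_Icc_succ_top] at h <;> nlinarith

/-- The paper's `M̃ - M`. The `t = 0` term of both series vanishes, as `(0 ^ 2)⁻¹ = 0`. -/
noncomputable def truncationError (z : ℕ → ℝ) (m : ℕ) : ℝ :=
  z 1 ^ 2 / ∑ t ∈ Icc 1 m, ((t : ℝ) ^ 2)⁻¹ * z t ^ 2 - z 1 ^ 2 / ∑' t : ℕ, ((t : ℝ) ^ 2)⁻¹ * z t ^ 2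

noncomputable def tailSum (z : ℕ → ℝ) (m : ℕ) : ℝ :=
  ∑' t, if m + 1 ≤ t then ((t : ℝ) ^ 2)⁻¹ * z t ^ 2 else 0

noncomputable def invSumThreeSq (z : ℕ → ℝ) : ℝ := (z 1 ^ 2 + z 2 ^ 2 + z 3 ^ 2)⁻¹

section InverseSquareWeights

variable (z : ℕ → ℝ)

theorem sq_le_sum_Icc_inv_sq_mul_sq {m : ℕ} (hm : 1 ≤ m) :
    z 1 ^ 2 ≤ ∑ t ∈ Icc 1 m, ((t : ℝ) ^ 2)⁻¹ * z t ^ 2 := by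
  calc z 1 ^ 2 = (((1 : ℕ) : ℝ) ^ 2)⁻¹ * z 1 ^ 2 := by simp
    _ ≤ _ := single_le_sum (f := fun t : ℕ => ((t : ℝ) ^ 2)⁻¹ * z t ^ 2)
      (fun t _ => by positivity) (mem_Icc.2 ⟨le_rfl, hm⟩)

theorem sum_sq_div_nine_le_tsum_inv_sq_mul_sq
    (hs : Summable fun t : ℕ => ((t : ℝ) ^ 2)⁻¹ * z t ^ 2) :
    (z 1 ^ 2 + z 2 ^ 2 + z 3 ^ 2) / 9 ≤ ∑' t : ℕ, ((t : ℝ) ^ 2)⁻¹ * z t ^ 2 := by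
  have h := hs.sum_le_tsum (Icc 1 3) fun t _ => by positivity
  rw [show Icc 1 3 = {1, 2, 3} by decide, sum_insert (by decide), sum_insert (by decide),
    sum_singleton] at h
  norm_num at h
  nlinarith [sq_nonneg (z 1), sq_nonneg (z 2), sq_nonneg (z 3)]

theorem truncationError_nonneg {m : ℕ} (hm : 1 ≤ m) : 0 ≤ truncationError z m := by
  have hA := sq_le_sum_Icc_inv_sq_mul_sq z hm
  by_cases hs : Summable fun t : ℕ => ((t : ℝ) ^ 2)⁻¹ * z t ^ 2
  · have hAB := hs.sum_le_tsum (Icc 1 m) fun t _ => by positivity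
    rcases (sq_nonneg (z 1)).trans hA |>.eq_or_lt with h0 | hpos
    · simp [truncationError, le_antisymm (h0 ▸ hA) (sq_nonneg _)]
    · exact sub_nonneg.2 (div_le_div_of_nonneg_left (sq_nonneg _) hpos hAB)
  · rw [truncationError, tsum_eq_zero_of_not_summable hs, div_zero, sub_zero]
    positivity

theorem truncationError_le_one {m : ℕ} (hm : 1 ≤ m) : truncationError z m ≤ 1 := by
  have h1 : z 1 ^ 2 / ∑ t ∈ Icc 1 m, ((t : ℝ) ^ 2)⁻¹ * z t ^ 2 ≤ 1 :=
    div_le_one_of_le₀ (sq_le_sum_Icc_inv_sq_mul_sq z hm) (by positivity)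
  have h2 : 0 ≤ z 1 ^ 2 / ∑' t : ℕ, ((t : ℝ) ^ 2)⁻¹ * z t ^ 2 :=
    div_nonneg (sq_nonneg _) (tsum_nonneg fun t => by positivity)
  rw [truncationError]
  linarith

theorem truncationError_le (hs : Summable fun t : ℕ => ((t : ℝ) ^ 2)⁻¹ * z t ^ 2) {m : ℕ}
    (hm : 1 ≤ m) : truncationError z m ≤ 9 * tailSum z m * invSumThreeSq z := by
  have hsplit := sum_Icc_add_tsum_tail (by simp) hs m
  have hR : 0 ≤ tailSum z m := tsum_nonneg fun t => by split_ifs <;> positivity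
  have hgap := div_sub_div_le_sub_div (sq_nonneg (z 1)) (sq_le_sum_Icc_inv_sq_mul_sq z hm)
    (le_add_of_nonneg_right hR |>.trans_eq hsplit)
  rw [← hsplit, add_sub_cancel_left, hsplit] at hgap
  rcases (by positivity : 0 ≤ z 1 ^ 2 + z 2 ^ 2 + z 3 ^ 2).eq_or_lt with hX | hX
  · have hz : z 1 = 0 := by nlinarith [sq_nonneg (z 1), sq_nonneg (z 2), sq_nonneg (z 3)]
    rw [truncationError, invSumThreeSq, ← hX, hz]
    simp
  · calc truncationError z m ≤ tailSum z m / ∑' t : ℕ, ((t : ℝ) ^ 2)⁻¹ * z t ^ 2 := hgap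
      _ ≤ tailSum z m / ((z 1 ^ 2 + z 2 ^ 2 + z 3 ^ 2) / 9) :=
        div_le_div_of_nonneg_left hR (by positivity) (sum_sq_div_nine_le_tsum_inv_sq_mul_sq z hs)
      _ = 9 * tailSum z m * invSumThreeSq z := by
        rw [invSumThreeSq]; field_simp

end InverseSquareWeights

section NonnegSeries

variable {α ι : Type*} {mα : MeasurableSpace α} {μ : Measure α} [Countable ι] {f : ι → α → ℝ}

theorem lintegral_tsum_ofReal_lt_top (h0 : ∀ i x, 0 ≤ f i x) (hint : ∀ i, Integrable (f i) μ)
    (hs : Summable fun i => ∫ x, f i x ∂μ) : ∫⁻ x, ∑' i, ENNReal.ofReal (f i x) ∂μ < ∞ := by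
  rw [lintegral_tsum fun i => (hint i).aemeasurable.ennreal_ofReal]
  simp_rw [← ofReal_integral_eq_lintegral_ofReal (hint _) (ae_of_all _ (h0 _))]
  rw [← ENNReal.ofReal_tsum_of_nonneg (fun i => integral_nonneg (h0 i)) hs]
  exact ENNReal.ofReal_lt_top

theorem ae_summable_of_summable_integral (h0 : ∀ i x, 0 ≤ f i x)
    (hint : ∀ i, Integrable (f i) μ) (hs : Summable fun i => ∫ x, f i x ∂μ) :
    ∀ᵐ x ∂μ, Summable fun i => f i x := by
  filter_upwards [ae_lt_top' (AEMeasurable.tsum fun i => (hint i).aemeasurable.ennreal_ofReal)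
    (lintegral_tsum_ofReal_lt_top h0 hint hs).ne] with x hx
  exact (ENNReal.summable_toReal hx.ne).congr fun i => ENNReal.toReal_ofReal (h0 i x)

theorem integrable_tsum_of_nonneg (h0 : ∀ i x, 0 ≤ f i x) (hint : ∀ i, Integrable (f i) μ)
    (hs : Summable fun i => ∫ x, f i x ∂μ) : Integrable (fun x => ∑' i, f i x) μ := by
  refine (integrable_toReal_of_lintegral_ne_top
    (AEMeasurable.tsum fun i => (hint i).aemeasurable.ennreal_ofReal)
    (lintegral_tsum_ofReal_lt_top h0 hint hs).ne).congr ?_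
  filter_upwards [ae_summable_of_summable_integral h0 hint hs] with x hx
  rw [← ENNReal.ofReal_tsum_of_nonneg (h0 · x) hx, ENNReal.toReal_ofReal (tsum_nonneg (h0 · x))]

theorem integral_tsum_of_nonneg (h0 : ∀ i x, 0 ≤ f i x) (hint : ∀ i, Integrable (f i) μ)
    (hs : Summable fun i => ∫ x, f i x ∂μ) : ∫ x, ∑' i, f i x ∂μ = ∑' i, ∫ x, f i x ∂μ :=
  (integral_tsum_of_summable_integral_norm hint <| hs.congr fun i =>
    integral_congr_ae (ae_of_all _ fun x => (Real.norm_of_nonneg (h0 i x)).symm)).symm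

end NonnegSeries

theorem gaussianPDFReal_le_one (m x : ℝ) : gaussianPDFReal m 1 x ≤ 1 := by
  rw [gaussianPDFReal_def]
  have h1 : 1 ≤ √(2 * Real.pi * ((1 : ℝ≥0) : ℝ)) :=
    Real.one_le_sqrt.2 (by push_cast; nlinarith [Real.pi_gt_three])
  have h2 : Real.exp (-(x - m) ^ 2 / (2 * ((1 : ℝ≥0) : ℝ))) ≤ 1 :=
    Real.exp_le_one_iff.2 (by push_cast; nlinarith [sq_nonneg (x - m)])
  simpa using mul_le_mul (inv_le_one_of_one_le₀ h1) h2 (Real.exp_nonneg _) zero_le_one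

theorem gaussianReal_le_volume (m : ℝ) (s : Set ℝ) : gaussianReal m 1 s ≤ volume s := by
  rw [gaussianReal_apply m one_ne_zero, ← setLIntegral_one]
  exact lintegral_mono fun x => ENNReal.ofReal_le_one.2 (gaussianPDFReal_le_one m x)

theorem integral_sq_gaussianReal (m : ℝ) (v : ℝ≥0) :
    ∫ x, x ^ 2 ∂gaussianReal m v = m ^ 2 + v := by
  have h := variance_eq_sub (memLp_id_gaussianReal 2 : MemLp id 2 (gaussianReal m v))
  simp only [variance_id_gaussianReal, Pi.pow_apply, id, integral_id_gaussianReal] at h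
  linarith

namespace ProbabilityTheory

variable {Ω : Type*} {mΩ : MeasurableSpace Ω} {P : Measure Ω} {X : Ω → ℝ} {m : ℝ} {v : ℝ≥0}

theorem HasLaw.integrable_sq_of_gaussianReal (hX : HasLaw X (gaussianReal m v) P) :
    Integrable (fun ω => X ω ^ 2) P := by
  have h : Integrable (fun x : ℝ => x ^ 2) (P.map X) :=
    hX.map_eq ▸ (memLp_id_gaussianReal 2).integrable_sq
  exact (integrable_map_measure h.1 hX.aemeasurable).1 h

theorem HasLaw.integral_sq_of_gaussianReal (hX : HasLaw X (gaussianReal m v) P) :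
    ∫ ω, X ω ^ 2 ∂P = m ^ 2 + v := by
  rw [← integral_sq_gaussianReal m v]
  exact hX.integral_comp (f := fun x => x ^ 2) (by fun_prop)

theorem HasLaw.measure_abs_lt_le_of_gaussianReal (hX : HasLaw X (gaussianReal m 1) P) (δ : ℝ) :
    P {ω | |X ω| < δ} ≤ ENNReal.ofReal (2 * δ) := by
  rw [hX.measure_eq (p := fun x => |x| < δ) (measurableSet_lt measurable_abs measurable_const)]
  refine (gaussianReal_le_volume m _).trans_eq ?_
  rw [show {x : ℝ | |x| < δ} = Set.Ioo (-δ) δ by ext; simp [abs_lt], Real.volume_Ioo]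
  ring_nf

theorem HasLaw.ae_ne_of_gaussianReal (hX : HasLaw X (gaussianReal m v) P) (hv : v ≠ 0) (c : ℝ) :
    ∀ᵐ ω ∂P, X ω ≠ c := by
  have := nullSingletonClass_gaussianReal (μ := m) hv
  rw [ae_iff]
  simpa using (hX.measure_eq (p := (· = c)) (measurableSet_singleton c)).trans
    (measure_singleton c)

theorem iIndepFun.indepFun_of_measurable_biSup {ι β γ δ : Type*} [mβ : MeasurableSpace β]
    [MeasurableSpace γ] [MeasurableSpace δ] {Z : ι → Ω → β} (hind : iIndepFun Z P)
    (hZ : ∀ i, Measurable (Z i)) {S T : Set ι} (hST : Disjoint S T) {f : Ω → γ} {g : Ω → δ}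
    (hf : Measurable[⨆ i ∈ S, mβ.comap (Z i)] f) (hg : Measurable[⨆ i ∈ T, mβ.comap (Z i)] g) :
    IndepFun f g P := by
  rw [IndepFun_iff_Indep]
  exact indep_of_indep_of_le_right (indep_of_indep_of_le_left
    (indep_iSup_of_disjoint (fun i => (hZ i).comap_le) hind.iIndep hST) hf.comap_le) hg.comap_le

end ProbabilityTheory

section GaussianSequence

variable {Ω : Type*} {mΩ : MeasurableSpace Ω} {P : Measure Ω} (Z : ℕ → Ω → ℝ)

theorem measure_sum_three_sq_lt_le (hlaw : ∀ t, HasLaw (Z t) (gaussianReal 0 1) P)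
    (hind : iIndepFun Z P) {δ : ℝ} (hδ : 0 ≤ δ) :
    P {ω | Z 1 ω ^ 2 + Z 2 ω ^ 2 + Z 3 ω ^ 2 < δ ^ 2} ≤ ENNReal.ofReal ((2 * δ) ^ 3) := by
  have hsub : {ω | Z 1 ω ^ 2 + Z 2 ω ^ 2 + Z 3 ω ^ 2 < δ ^ 2}
      ⊆ ⋂ i ∈ ({1, 2, 3} : Finset ℕ), Z i ⁻¹' {x | |x| < δ} := by
    intro ω hω
    simp only [Set.mem_ofPred_eq] at hω
    simp only [Set.mem_iInter, Set.mem_preimage, Set.mem_ofPred_eq, Finset.mem_insert,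
      Finset.mem_singleton]
    rintro i (rfl | rfl | rfl) <;> refine abs_lt_of_sq_lt_sq ?_ hδ <;>
      nlinarith [sq_nonneg (Z 1 ω), sq_nonneg (Z 2 ω), sq_nonneg (Z 3 ω)]
  calc P {ω | Z 1 ω ^ 2 + Z 2 ω ^ 2 + Z 3 ω ^ 2 < δ ^ 2}
      ≤ P (⋂ i ∈ ({1, 2, 3} : Finset ℕ), Z i ⁻¹' {x | |x| < δ}) := measure_mono hsub
    _ = ∏ i ∈ ({1, 2, 3} : Finset ℕ), P (Z i ⁻¹' {x | |x| < δ}) :=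
      hind.meas_biInter fun i _ =>
        ⟨_, measurableSet_lt measurable_abs measurable_const, rfl⟩
    _ ≤ ∏ i ∈ ({1, 2, 3} : Finset ℕ), ENNReal.ofReal (2 * δ) :=
      prod_le_prod' fun i _ => (hlaw i).measure_abs_lt_le_of_gaussianReal δ
    _ = ENNReal.ofReal ((2 * δ) ^ 3) := by
      rw [prod_const, ENNReal.ofReal_pow (by positivity)]
      rfl

theorem measure_lt_invSumThreeSq_le (hlaw : ∀ t, HasLaw (Z t) (gaussianReal 0 1) P)
    (hind : iIndepFun Z P) {t : ℝ} (ht : 0 < t) :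
    P {ω | t < invSumThreeSq (Z · ω)} ≤ ENNReal.ofReal (8 * t ^ (-(3 / 2) : ℝ)) := by
  set δ := t ^ (-(1 / 2) : ℝ)
  have hδ2 : δ ^ 2 = t⁻¹ := by
    rw [← Real.rpow_mul_natCast ht.le, ← Real.rpow_neg_one]
    norm_num
  have hδ3 : (2 * δ) ^ 3 = 8 * t ^ (-(3 / 2) : ℝ) := by
    rw [mul_pow, ← Real.rpow_mul_natCast ht.le]
    norm_num
  refine (measure_mono fun ω hω => ?_).trans
    (hδ3 ▸ measure_sum_three_sq_lt_le Z hlaw hind (by positivity))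
  simp only [Set.mem_ofPred_eq, invSumThreeSq] at hω ⊢
  rw [hδ2]
  exact (lt_inv_comm₀ ht (inv_pos.1 (ht.trans hω))).1 hω

theorem integrable_invSumThreeSq (hlaw : ∀ t, HasLaw (Z t) (gaussianReal 0 1) P)
    (hind : iIndepFun Z P) [IsProbabilityMeasure P] :
    Integrable (fun ω => invSumThreeSq (Z · ω)) P := by
  have hW0 : ∀ ω, 0 ≤ invSumThreeSq (Z · ω) := fun ω => inv_nonneg.2 (by positivity)
  have hmW : AEMeasurable (fun ω => invSumThreeSq (Z · ω)) P := by
    unfold invSumThreeSq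
    have := fun t => (hlaw t).aemeasurable
    fun_prop
  refine ⟨hmW.aestronglyMeasurable, ?_⟩
  rw [hasFiniteIntegral_iff_ofReal (ae_of_all _ hW0),
    lintegral_eq_lintegral_meas_lt P (ae_of_all _ hW0) hmW,
    ← Set.Ioc_union_Ioi_eq_Ioi zero_le_one]
  refine (lintegral_union_le _ _ _).trans_lt (ENNReal.add_lt_top.2 ⟨?_, ?_⟩)
  · calc ∫⁻ t in Set.Ioc 0 1, P {ω | t < invSumThreeSq (Z · ω)}
        ≤ ∫⁻ _ in Set.Ioc (0 : ℝ) 1, 1 := setLIntegral_mono measurable_const fun _ _ => prob_le_one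
      _ < ∞ := by simp
  · calc ∫⁻ t in Set.Ioi 1, P {ω | t < invSumThreeSq (Z · ω)}
        ≤ ∫⁻ t in Set.Ioi (1 : ℝ), ENNReal.ofReal (8 * t ^ (-(3 / 2) : ℝ)) :=
          setLIntegral_mono' measurableSet_Ioi fun t ht =>
            measure_lt_invSumThreeSq_le Z hlaw hind (zero_lt_one.trans ht)
      _ < ∞ := ((integrableOn_Ioi_rpow_of_lt (by norm_num) one_pos).const_mul 8).lintegral_lt_top

theorem one_third_le_integral_invSumThreeSq (hlaw : ∀ t, HasLaw (Z t) (gaussianReal 0 1) P)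
    (hind : iIndepFun Z P) [IsProbabilityMeasure P] :
    1 / 3 ≤ ∫ ω, invSumThreeSq (Z · ω) ∂P := by
  have hsq t := (hlaw t).integrable_sq_of_gaussianReal
  have hsq1 t : ∫ ω, Z t ω ^ 2 ∂P = 1 := by simpa using (hlaw t).integral_sq_of_gaussianReal
  have h12 : Integrable (fun ω => Z 1 ω ^ 2 + Z 2 ω ^ 2) P := (hsq 1).add (hsq 2)
  have hX : Integrable (fun ω => Z 1 ω ^ 2 + Z 2 ω ^ 2 + Z 3 ω ^ 2) P := h12.add (hsq 3)
  have htangent : ∀ᵐ ω ∂P,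
      2 / 3 - (Z 1 ω ^ 2 + Z 2 ω ^ 2 + Z 3 ω ^ 2) / 9 ≤ invSumThreeSq (Z · ω) := by
    filter_upwards [(hlaw 1).ae_ne_of_gaussianReal one_ne_zero 0] with ω hω
    exact two_thirds_sub_div_nine_le_inv (by positivity)
  calc (1 : ℝ) / 3 = ∫ ω, (2 / 3 - (Z 1 ω ^ 2 + Z 2 ω ^ 2 + Z 3 ω ^ 2) / 9) ∂P := by
        rw [integral_sub (integrable_const _) (hX.div_const 9), integral_const, integral_div,
          integral_add h12 (hsq 3), integral_add (hsq 1) (hsq 2), hsq1, hsq1, hsq1]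
        norm_num
    _ ≤ ∫ ω, invSumThreeSq (Z · ω) ∂P :=
      integral_mono_ae ((integrable_const _).sub (hX.div_const 9))
        (integrable_invSumThreeSq Z hlaw hind) htangent

end GaussianSequence

section GaussianSeries

variable {Ω : Type*} {mΩ : MeasurableSpace Ω} {P : Measure Ω} (Z : ℕ → Ω → ℝ)

theorem ae_summable_inv_sq_mul_sq (hlaw : ∀ t, HasLaw (Z t) (gaussianReal 0 1) P) :
    ∀ᵐ ω ∂P, Summable fun t : ℕ => ((t : ℝ) ^ 2)⁻¹ * Z t ω ^ 2 := by
  refine ae_summable_of_summable_integral (fun t ω => by positivity)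
    (fun t => (hlaw t).integrable_sq_of_gaussianReal.const_mul _) ?_
  simp [integral_const_mul, (hlaw _).integral_sq_of_gaussianReal]

theorem integrable_tail_term (hlaw : ∀ t, HasLaw (Z t) (gaussianReal 0 1) P) (m t : ℕ) :
    Integrable (fun ω => if m + 1 ≤ t then ((t : ℝ) ^ 2)⁻¹ * Z t ω ^ 2 else 0) P := by
  by_cases h : m + 1 ≤ t <;> simp [h, (hlaw t).integrable_sq_of_gaussianReal.const_mul]

theorem integral_tail_term (hlaw : ∀ t, HasLaw (Z t) (gaussianReal 0 1) P) (m t : ℕ) :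
    ∫ ω, (if m + 1 ≤ t then ((t : ℝ) ^ 2)⁻¹ * Z t ω ^ 2 else 0) ∂P
      = if m + 1 ≤ t then ((t : ℝ) ^ 2)⁻¹ else 0 := by
  by_cases h : m + 1 ≤ t <;> simp [h, integral_const_mul, (hlaw t).integral_sq_of_gaussianReal]

theorem integrable_tailSum (hlaw : ∀ t, HasLaw (Z t) (gaussianReal 0 1) P) (m : ℕ) :
    Integrable (fun ω => tailSum (Z · ω) m) P :=
  integrable_tsum_of_nonneg (fun t ω => by split_ifs <;> positivity) (integrable_tail_term Z hlaw m)
    (by simpa only [integral_tail_term Z hlaw m] using summable_ite_tail summable_inv_sq m)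

theorem integral_tailSum (hlaw : ∀ t, HasLaw (Z t) (gaussianReal 0 1) P) (m : ℕ) :
    ∫ ω, tailSum (Z · ω) m ∂P = ∑' t : ℕ, if m + 1 ≤ t then ((t : ℝ) ^ 2)⁻¹ else 0 := by
  unfold tailSum
  rw [integral_tsum_of_nonneg (fun t ω => by split_ifs <;> positivity)
    (integrable_tail_term Z hlaw m)
    (by simpa only [integral_tail_term Z hlaw m] using summable_ite_tail summable_inv_sq m)]
  exact tsum_congr (integral_tail_term Z hlaw m)

theorem measurable_truncationError (hmeas : ∀ t, Measurable (Z t)) (m : ℕ) :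
    Measurable fun ω => truncationError (Z · ω) m := by
  have hterm (t : ℕ) : Measurable fun ω => ((t : ℝ) ^ 2)⁻¹ * Z t ω ^ 2 :=
    ((hmeas t).pow_const 2).const_mul _
  exact (((hmeas 1).pow_const 2).div (Finset.measurable_sum _ fun t _ => hterm t)).sub
    (((hmeas 1).pow_const 2).div (Measurable.tsum hterm))

theorem integrable_truncationError [IsProbabilityMeasure P] (hmeas : ∀ t, Measurable (Z t))
    {m : ℕ} (hm : 1 ≤ m) : Integrable (fun ω => truncationError (Z · ω) m) P :=
  .of_bound (μ := P) (measurable_truncationError Z hmeas m).aestronglyMeasurable 1 <|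
    ae_of_all _ fun ω => by
      rw [Real.norm_eq_abs, abs_le]
      exact ⟨by linarith [truncationError_nonneg (Z · ω) hm], truncationError_le_one _ hm⟩

theorem indepFun_tailSum_invSumThreeSq (hmeas : ∀ t, Measurable (Z t)) (hind : iIndepFun Z P)
    {m : ℕ} (hm : 3 ≤ m) :
    IndepFun (fun ω => tailSum (Z · ω) m) (fun ω => invSumThreeSq (Z · ω)) P := by
  have hZ (S : Set ℕ) {t : ℕ} (ht : t ∈ S) :
      Measurable[⨆ i ∈ S, MeasurableSpace.comap (Z i) inferInstance] (Z t) :=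
    Measurable.of_comap_le (le_biSup (fun i => MeasurableSpace.comap (Z i) inferInstance) ht)
  refine hind.indepFun_of_measurable_biSup hmeas (S := {t | m + 1 ≤ t}) (T := {1, 2, 3}) ?_ ?_ ?_
  · rw [Set.disjoint_left]
    rintro t ht (rfl | rfl | rfl) <;> simp at ht <;> omega
  · -- `Measurable.tsum` takes the σ-algebra as an instance argument.
    let _ : MeasurableSpace Ω := ⨆ i ∈ {t | m + 1 ≤ t}, MeasurableSpace.comap (Z i) inferInstance
    refine Measurable.tsum fun t => ?_
    by_cases h : m + 1 ≤ t
    · simpa [h] using ((hZ _ (t := t) h).pow_const 2).const_mul ((t : ℝ) ^ 2)⁻¹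
    · simp [h]
  · exact ((((hZ _ (t := 1) (by simp)).pow_const 2).add ((hZ _ (t := 2) (by simp)).pow_const 2)).add
      ((hZ _ (t := 3) (by simp)).pow_const 2)).inv

theorem integral_truncationError_le [IsProbabilityMeasure P] (hmeas : ∀ t, Measurable (Z t))
    (hlaw : ∀ t, HasLaw (Z t) (gaussianReal 0 1) P) (hind : iIndepFun Z P) {m : ℕ} (hm : 1 ≤ m) :
    ∫ ω, truncationError (Z · ω) m ∂P
      ≤ 9 * (∫ ω, tailSum (Z · ω) m ∂P) * ∫ ω, invSumThreeSq (Z · ω) ∂P := by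
  rcases le_or_gt m 2 with hm2 | hm3
  · -- Here the tail shares `Z₃` with `invSumThreeSq`, but `E[M̃ - M] ≤ 1 ≤ 9 · (1/3) · (1/3)`.
    have hW := one_third_le_integral_invSumThreeSq Z hlaw hind
    have hgap : ∫ ω, truncationError (Z · ω) m ∂P ≤ 1 := by
      simpa using integral_mono (integrable_truncationError Z hmeas hm)
        (integrable_const (μ := P) 1) fun ω => truncationError_le_one (Z · ω) hm
    have hR : 1 / 3 ≤ ∫ ω, tailSum (Z · ω) m ∂P :=
      (integral_tailSum Z hlaw m).symm ▸ one_third_le_tsum_inv_sq_tail hm2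
    nlinarith
  · have hTW := indepFun_tailSum_invSumThreeSq Z hmeas hind hm3
    have hT := integrable_tailSum Z hlaw m
    have hWi := integrable_invSumThreeSq Z hlaw hind
    calc ∫ ω, truncationError (Z · ω) m ∂P
        ≤ ∫ ω, 9 * (tailSum (Z · ω) m * invSumThreeSq (Z · ω)) ∂P := by
          refine integral_mono_ae (integrable_truncationError Z hmeas hm)
            ((hTW.integrable_mul hT hWi).const_mul 9) ?_
          filter_upwards [ae_summable_inv_sq_mul_sq Z hlaw] with ω hω
          rw [← mul_assoc]
          exact truncationError_le _ hω hm
      _ = 9 * (∫ ω, tailSum (Z · ω) m ∂P) * ∫ ω, invSumThreeSq (Z · ω) ∂P := by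
          rw [integral_const_mul, hTW.integral_fun_mul_eq_mul_integral hT.1 hWi.1, mul_assoc]

end GaussianSeries

/-- For i.i.d. standard normals `Z_t`, with `M = Z₁²/Σ_{t≥1} t⁻²Z_t²` and
`M̃ = Z₁²/Σ_{t=1}^m t⁻²Z_t²`, one has
`0 ≤ E[M̃ - M] ≤ 9·E[Σ_{t>m} t⁻²Z_t²]·E[(Z₁²+Z₂²+Z₃²)⁻¹]`, and in particular
`E[M̃ - M] ≤ C/m` for an absolute constant `C`. -/
theorem stmt_8 {Ω : Type*} [MeasureSpace Ω] [IsProbabilityMeasure (ℙ : Measure Ω)]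
    (Z : ℕ → Ω → ℝ) (hmeas : ∀ t, Measurable (Z t))
    (hindep : iIndepFun Z ℙ)
    (hgauss : ∀ t, Measure.map (Z t) ℙ = gaussianReal 0 1) :
    (∀ m : ℕ, 1 ≤ m →
      0 ≤ ∫ ω, ((Z 1 ω) ^ 2 / ∑ t ∈ Finset.Icc 1 m, ((t : ℝ) ^ 2)⁻¹ * (Z t ω) ^ 2
          - (Z 1 ω) ^ 2 / ∑' t : ℕ, ((t : ℝ) ^ 2)⁻¹ * (Z t ω) ^ 2) ∧
      ∫ ω, ((Z 1 ω) ^ 2 / ∑ t ∈ Finset.Icc 1 m, ((t : ℝ) ^ 2)⁻¹ * (Z t ω) ^ 2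
          - (Z 1 ω) ^ 2 / ∑' t : ℕ, ((t : ℝ) ^ 2)⁻¹ * (Z t ω) ^ 2) ≤
        9 * (∫ ω, ∑' t : ℕ, (if m + 1 ≤ t then ((t : ℝ) ^ 2)⁻¹ * (Z t ω) ^ 2 else 0))
          * ∫ ω, ((Z 1 ω) ^ 2 + (Z 2 ω) ^ 2 + (Z 3 ω) ^ 2)⁻¹) ∧
    ∃ C : ℝ, 0 < C ∧ ∀ m : ℕ, 1 ≤ m →
      ∫ ω, ((Z 1 ω) ^ 2 / ∑ t ∈ Finset.Icc 1 m, ((t : ℝ) ^ 2)⁻¹ * (Z t ω) ^ 2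
          - (Z 1 ω) ^ 2 / ∑' t : ℕ, ((t : ℝ) ^ 2)⁻¹ * (Z t ω) ^ 2) ≤ C / m := by
  have hlaw t : HasLaw (Z t) (gaussianReal 0 1) ℙ := ⟨(hmeas t).aemeasurable, hgauss t⟩
  have hW := one_third_le_integral_invSumThreeSq Z hlaw hindep
  refine ⟨fun m hm => ⟨integral_nonneg fun ω => truncationError_nonneg (Z · ω) hm,
    integral_truncationError_le Z hmeas hlaw hindep hm⟩,
    9 * ∫ ω, invSumThreeSq (Z · ω), by linarith, fun m hm => ?_⟩
  calc ∫ ω, truncationError (Z · ω) m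
      ≤ 9 * (∫ ω, tailSum (Z · ω) m) * ∫ ω, invSumThreeSq (Z · ω) :=
        integral_truncationError_le Z hmeas hlaw hindep hm
    _ ≤ 9 * (m : ℝ)⁻¹ * ∫ ω, invSumThreeSq (Z · ω) := by
        gcongr
        rw [integral_tailSum Z hlaw m]
        exact tsum_inv_sq_tail_le (by omega)
    _ = 9 * (∫ ω, invSumThreeSq (Z · ω)) / m := by ring
end

section
/- Let ε_1, …, ε_n be independent real random variables with E[ε_i]=0, E[ε_i²]=1 and uniformly bounded eighth moments E[ε_i⁸] ≤ κ₈, and let A be a real symmetric n×n matrix. Then E[(ε'Aε - tr A)⁴] ≤ C(κ₈) · ‖A‖_F⁴ for a constant C depending only on κ₈, where ε = (ε_1,…,ε_n)'. -/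
/-!
Reveal the coordinates one at a time. Writing `Z_s` for the centred quadratic form restricted to
the coordinates in `s`, adding a coordinate `j ∉ s` changes `Z_s` by
`D = A_jj (ε_j² - 1) + 2 ε_j L`, where `L = ∑_{t ∈ s} A_jt ε_t`. Since `Z_s` and `L` are
independent of `ε_j`, which is centred with `E ε_j² = 1`, the increment is orthogonal to `Z_s³`.
For `E[f³ g] = 0`, expanding and using Cauchy–Schwarz on `E[f² g²]` gives
`‖f + g‖₄² ≤ ‖f‖₄² + 4 ‖g‖₄²`, so `‖Z‖₄²` is at most four times the sum of the `‖D‖₄²`. The same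
argument applied to the linear form `L` gives `‖L‖₄² ≲ ∑_t A_jt²`, hence `‖D‖₄² ≲ ∑_t A_jt²`,
and summing over `j` yields `‖Z‖₄² ≲ ‖A‖_F²`.
-/

open MeasureTheory ProbabilityTheory Matrix
open scoped ENNReal

theorem ENNReal.holderTriple_two_mul (p : ℝ≥0∞) : HolderTriple (2 * p) (2 * p) p :=
  ⟨by rw [← two_mul, ENNReal.mul_inv (by simp) (by simp), ← mul_assoc,
    ENNReal.mul_inv_cancel two_ne_zero ofNat_ne_top, one_mul]⟩

instance : ENNReal.HolderTriple 8 8 4 := by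
  simpa only [show (2 : ℝ≥0∞) * 4 = 8 by norm_num] using ENNReal.holderTriple_two_mul 4

instance : ENNReal.HolderTriple 4 4 2 := by
  simpa only [show (2 : ℝ≥0∞) * 2 = 4 by norm_num] using ENNReal.holderTriple_two_mul 2

section FourthMoment

variable {Ω : Type*} [MeasurableSpace Ω] {μ : Measure Ω} {f g : Ω → ℝ}

theorem MeasureTheory.MemLp.integrable_pow_of_even {p : ℕ} (hf : MemLp f p μ) (hp : Even p)
    (hp0 : p ≠ 0) : Integrable (fun ω => f ω ^ p) μ := by
  simpa [Real.norm_eq_abs, hp.pow_abs] using hf.integrable_norm_pow hp0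

theorem MeasureTheory.MemLp.integrable_pow_four (hf : MemLp f 4 μ) :
    Integrable (fun ω => f ω ^ 4) μ :=
  hf.integrable_pow_of_even (by decide) (by norm_num)

theorem MeasureTheory.MemLp.integrable_pow_three_mul (hf : MemLp f 4 μ) (hg : MemLp g 4 μ) :
    Integrable (fun ω => f ω ^ 3 * g ω) μ := by
  refine (hf.integrable_pow_four.add hg.integrable_pow_four).mono' ((hf.1.pow 3).mul hg.1)
    (ae_of_all _ fun ω => ?_)
  have hf4 : f ω ^ 4 = |f ω| ^ 4 := ((show Even 4 by decide).pow_abs _).symm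
  have hg4 : g ω ^ 4 = |g ω| ^ 4 := ((show Even 4 by decide).pow_abs _).symm
  rw [Real.norm_eq_abs, abs_mul, abs_pow, Pi.add_apply, hf4, hg4]
  have ha := abs_nonneg (f ω)
  have hb := abs_nonneg (g ω)
  rcases le_total |f ω| |g ω| with h | h
  · nlinarith [pow_le_pow_left₀ ha h 3, pow_nonneg ha 4, pow_nonneg hb 3]
  · nlinarith [pow_le_pow_left₀ hb h 3, pow_nonneg hb 4, pow_nonneg ha 3]

theorem integral_sq_mul_sq_le (hf : MemLp f 4 μ) (hg : MemLp g 4 μ) :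
    ∫ ω, f ω ^ 2 * g ω ^ 2 ∂μ ≤ √(∫ ω, f ω ^ 4 ∂μ) * √(∫ ω, g ω ^ 4 ∂μ) := by
  have hsq {h : Ω → ℝ} (hh : MemLp h 4 μ) : MemLp (fun ω => h ω ^ 2) (ENNReal.ofReal 2) μ := by
    simpa [sq] using hh.mul' hh
  have key := integral_mul_le_Lp_mul_Lq_of_nonneg Real.HolderConjugate.two_two
    (ae_of_all _ fun ω => sq_nonneg (f ω)) (ae_of_all _ fun ω => sq_nonneg (g ω)) (hsq hf) (hsq hg)
  simpa [← pow_mul, Real.sqrt_eq_rpow] using key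

theorem sqrt_integral_const_mul_pow_four (c : ℝ) :
    √(∫ ω, (c * f ω) ^ 4 ∂μ) = c ^ 2 * √(∫ ω, f ω ^ 4 ∂μ) := by
  simp_rw [mul_pow, integral_const_mul]
  rw [Real.sqrt_mul (by positivity), show c ^ 4 = (c ^ 2) ^ 2 by ring, Real.sqrt_sq (by positivity)]

theorem sqrt_integral_add_pow_four_le (hf : MemLp f 4 μ) (hg : MemLp g 4 μ) :
    √(∫ ω, (f ω + g ω) ^ 4 ∂μ) ≤ 3 * (√(∫ ω, f ω ^ 4 ∂μ) + √(∫ ω, g ω ^ 4 ∂μ)) := by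
  have hf4 := hf.integrable_pow_four
  have hg4 := hg.integrable_pow_four
  have hpt : ∀ ω, (f ω + g ω) ^ 4 ≤ 8 * f ω ^ 4 + 8 * g ω ^ 4 := fun ω => by
    nlinarith [sq_nonneg (f ω - g ω), sq_nonneg (f ω + g ω), sq_nonneg (f ω ^ 2 - g ω ^ 2)]
  have hexp : ∫ ω, (f ω + g ω) ^ 4 ∂μ ≤ 8 * ∫ ω, f ω ^ 4 ∂μ + 8 * ∫ ω, g ω ^ 4 ∂μ := by
    calc ∫ ω, (f ω + g ω) ^ 4 ∂μ ≤ ∫ ω, (8 * f ω ^ 4 + 8 * g ω ^ 4) ∂μ :=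
          integral_mono_of_nonneg (ae_of_all _ fun _ => by positivity) (by fun_prop)
            (ae_of_all _ hpt)
      _ = _ := by
          rw [integral_add (by fun_prop) (by fun_prop), integral_const_mul, integral_const_mul]
  have hX := Real.sq_sqrt (integral_nonneg fun ω => by positivity : 0 ≤ ∫ ω, f ω ^ 4 ∂μ)
  have hY := Real.sq_sqrt (integral_nonneg fun ω => by positivity : 0 ≤ ∫ ω, g ω ^ 4 ∂μ)
  rw [Real.sqrt_le_iff]
  refine ⟨by positivity, ?_⟩
  nlinarith [Real.sqrt_nonneg (∫ ω, f ω ^ 4 ∂μ), Real.sqrt_nonneg (∫ ω, g ω ^ 4 ∂μ)]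

theorem sqrt_integral_add_pow_four_le_of_orthogonal (hf : MemLp f 4 μ) (hg : MemLp g 4 μ)
    (horth : ∫ ω, f ω ^ 3 * g ω ∂μ = 0) :
    √(∫ ω, (f ω + g ω) ^ 4 ∂μ) ≤ √(∫ ω, f ω ^ 4 ∂μ) + 4 * √(∫ ω, g ω ^ 4 ∂μ) := by
  have hf4 := hf.integrable_pow_four
  have hg4 := hg.integrable_pow_four
  have hfg3 := hf.integrable_pow_three_mul hg
  have hfg2 : Integrable (fun ω => f ω ^ 2 * g ω ^ 2) μ := by
    simpa [mul_pow] using (hg.mul' hf).integrable_sq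
  -- `(f + g)⁴` falls short of the right-hand side by `2 g² (f - g)²`
  have hpt : ∀ ω, (f ω + g ω) ^ 4 ≤
      f ω ^ 4 + 4 * (f ω ^ 3 * g ω) + 8 * (f ω ^ 2 * g ω ^ 2) + 3 * g ω ^ 4 := fun ω => by
    nlinarith [sq_nonneg (g ω * (f ω - g ω))]
  have hexp : ∫ ω, (f ω + g ω) ^ 4 ∂μ ≤
      ∫ ω, f ω ^ 4 ∂μ + 8 * ∫ ω, f ω ^ 2 * g ω ^ 2 ∂μ + 3 * ∫ ω, g ω ^ 4 ∂μ := by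
    calc ∫ ω, (f ω + g ω) ^ 4 ∂μ
        ≤ ∫ ω, (f ω ^ 4 + 4 * (f ω ^ 3 * g ω) + 8 * (f ω ^ 2 * g ω ^ 2) + 3 * g ω ^ 4) ∂μ :=
          integral_mono_of_nonneg (ae_of_all _ fun _ => by positivity) (by fun_prop)
            (ae_of_all _ hpt)
      _ = _ := by
          rw [integral_add (by fun_prop) (by fun_prop), integral_add (by fun_prop) (by fun_prop),
            integral_add hf4 (by fun_prop), integral_const_mul, integral_const_mul,
            integral_const_mul, horth]
          ring
  have hcs := integral_sq_mul_sq_le hf hg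
  have hX := Real.sq_sqrt (integral_nonneg fun ω => by positivity : 0 ≤ ∫ ω, f ω ^ 4 ∂μ)
  have hY := Real.sq_sqrt (integral_nonneg fun ω => by positivity : 0 ≤ ∫ ω, g ω ^ 4 ∂μ)
  rw [Real.sqrt_le_iff]
  refine ⟨by positivity, ?_⟩
  nlinarith [Real.sqrt_nonneg (∫ ω, f ω ^ 4 ∂μ), Real.sqrt_nonneg (∫ ω, g ω ^ 4 ∂μ)]

theorem sqrt_integral_pow_four_le_of_orthogonal_increments {ι : Type*} [DecidableEq ι]
    {F : Finset ι → Ω → ℝ} {b : ι → ℝ} (hF : ∀ s, MemLp (F s) 4 μ) (h_empty : F ∅ = 0)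
    (h_orth : ∀ j s, j ∉ s → ∫ ω, F s ω ^ 3 * (F (insert j s) ω - F s ω) ∂μ = 0)
    (h_step : ∀ j s, j ∉ s → √(∫ ω, (F (insert j s) ω - F s ω) ^ 4 ∂μ) ≤ b j)
    (s : Finset ι) :
    √(∫ ω, F s ω ^ 4 ∂μ) ≤ 4 * ∑ j ∈ s, b j := by
  induction s using Finset.induction_on with
  | empty => simp [h_empty]
  | insert j s hj ih =>
    have h := sqrt_integral_add_pow_four_le_of_orthogonal (hF s) ((hF _).sub (hF s))
      (h_orth j s hj)
    simp only [Pi.sub_apply, add_sub_cancel] at h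
    rw [Finset.sum_insert hj]
    linarith [h_step j s hj]

theorem integral_pow_four_le_one_add_integral_pow_eight [IsProbabilityMeasure μ]
    (hf : MemLp f 8 μ) : ∫ ω, f ω ^ 4 ∂μ ≤ 1 + ∫ ω, f ω ^ 8 ∂μ := by
  have hf8 := hf.integrable_pow_of_even (p := 8) (by decide) (by norm_num)
  calc ∫ ω, f ω ^ 4 ∂μ ≤ ∫ ω, (1 + f ω ^ 8) ∂μ :=
        integral_mono_of_nonneg (ae_of_all _ fun _ => by positivity) (by fun_prop)
          (ae_of_all _ fun ω => by nlinarith [sq_nonneg (f ω ^ 4 - 1)])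
    _ = 1 + ∫ ω, f ω ^ 8 ∂μ := by
        rw [integral_add (integrable_const 1) hf8]
        simp

theorem integral_sq_sub_one_pow_four_le [IsProbabilityMeasure μ] (hf : MemLp f 8 μ) :
    ∫ ω, (f ω ^ 2 - 1) ^ 4 ∂μ ≤ 8 * ∫ ω, f ω ^ 8 ∂μ + 8 := by
  have hf8 := hf.integrable_pow_of_even (p := 8) (by decide) (by norm_num)
  have hpt : ∀ ω, (f ω ^ 2 - 1) ^ 4 ≤ 8 * f ω ^ 8 + 8 := fun ω => by
    nlinarith [sq_nonneg (f ω ^ 2 + 1), sq_nonneg (f ω ^ 4 - 1), sq_nonneg (f ω ^ 4 + 1),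
      sq_nonneg (f ω ^ 2 - 1), sq_nonneg (f ω)]
  calc ∫ ω, (f ω ^ 2 - 1) ^ 4 ∂μ ≤ ∫ ω, (8 * f ω ^ 8 + 8) ∂μ :=
        integral_mono_of_nonneg (ae_of_all _ fun _ => by positivity) (by fun_prop)
          (ae_of_all _ hpt)
    _ = 8 * ∫ ω, f ω ^ 8 ∂μ + 8 := by
        rw [integral_add (by fun_prop) (integrable_const 8), integral_const_mul]
        simp

end FourthMoment

section CenteredQuadForm

variable {ι : Type*}

def centeredQuadForm (A : Matrix ι ι ℝ) (s : Finset ι) (x : ι → ℝ) : ℝ :=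
  ∑ u ∈ s, ∑ t ∈ s, A u t * x u * x t - ∑ u ∈ s, A u u

theorem centeredQuadForm_insert [DecidableEq ι] {A : Matrix ι ι ℝ} (hA : A.IsSymm)
    {s : Finset ι} {j : ι} (hj : j ∉ s) (x : ι → ℝ) :
    centeredQuadForm A (insert j s) x =
      centeredQuadForm A s x + (A j j * (x j ^ 2 - 1) + 2 * x j * ∑ t ∈ s, A j t * x t) := by
  have hcol : ∑ u ∈ s, A u j * x u * x j = x j * ∑ t ∈ s, A j t * x t := by
    rw [Finset.mul_sum]
    exact Finset.sum_congr rfl fun u _ => by rw [hA.apply]; ring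
  have hrow : ∑ t ∈ s, A j t * x j * x t = x j * ∑ t ∈ s, A j t * x t := by
    rw [Finset.mul_sum]
    exact Finset.sum_congr rfl fun t _ => by ring
  simp only [centeredQuadForm, Finset.sum_insert hj, Finset.sum_add_distrib, hcol, hrow]
  ring

theorem dependsOn_centeredQuadForm (A : Matrix ι ι ℝ) (s : Finset ι) :
    DependsOn (centeredQuadForm A s) s := fun x y hxy => by
  simp +contextual [centeredQuadForm, hxy]

@[fun_prop]
theorem measurable_centeredQuadForm (A : Matrix ι ι ℝ) (s : Finset ι) :
    Measurable (centeredQuadForm A s) := by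
  unfold centeredQuadForm
  fun_prop

theorem memLp_centeredQuadForm {Ω : Type*} [MeasurableSpace Ω] {μ : Measure Ω}
    [IsFiniteMeasure μ] {ε : ι → Ω → ℝ} (hL8 : ∀ i, MemLp (ε i) 8 μ) (A : Matrix ι ι ℝ)
    (s : Finset ι) : MemLp (fun ω => centeredQuadForm A s (ε · ω)) 4 μ := by
  unfold centeredQuadForm
  exact (memLp_finsetSum s fun u _ => memLp_finsetSum s fun t _ =>
    (hL8 t).mul' ((hL8 u).const_mul (A u t))).sub (memLp_const _)

end CenteredQuadForm

section IndependentCoordinates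

variable {Ω ι : Type*} [MeasurableSpace Ω] {μ : Measure Ω} [DecidableEq ι] {ε : ι → Ω → ℝ}

theorem ProbabilityTheory.iIndepFun.integral_mul_of_dependsOn (hind : iIndepFun ε μ)
    (hmeas : ∀ i, Measurable (ε i)) {s : Finset ι} {j : ι} (hj : j ∉ s)
    {F : (ι → ℝ) → ℝ} (hF : Measurable F) (hdep : DependsOn F s) {ψ : ℝ → ℝ}
    (hψ : Measurable ψ) :
    ∫ ω, F (ε · ω) * ψ (ε j ω) ∂μ = (∫ ω, F (ε · ω) ∂μ) * ∫ ω, ψ (ε j ω) ∂μ := by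
  have hfactor : (fun ω => F (ε · ω)) =
      (fun v => F (Function.updateFinset 0 s v)) ∘ fun ω (i : s) => ε i ω :=
    funext fun ω => hdep fun i hi => by simp [Function.updateFinset, Finset.mem_coe.1 hi]
  have h : IndepFun (fun ω => F (ε · ω)) (fun ω => ψ (ε j ω)) μ := by
    rw [hfactor]
    exact (hind.indepFun_finset s {j} (Finset.disjoint_singleton_right.2 hj) hmeas).comp
      (hF.comp (measurable_updateFinset (x := 0)))
      (hψ.comp (measurable_pi_apply ⟨j, Finset.mem_singleton_self j⟩))
  exact h.integral_fun_mul_eq_mul_integral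
    (hF.comp (measurable_pi_lambda _ hmeas)).aestronglyMeasurable
    (hψ.comp (hmeas j)).aestronglyMeasurable

theorem sqrt_integral_sum_mul_pow_four_le (hind : iIndepFun ε μ) (hmeas : ∀ i, Measurable (ε i))
    (hL4 : ∀ i, MemLp (ε i) 4 μ) (hmean : ∀ i, ∫ ω, ε i ω ∂μ = 0) {K : ℝ}
    (hK : ∀ i, ∫ ω, ε i ω ^ 4 ∂μ ≤ K) (a : ι → ℝ) (s : Finset ι) :
    √(∫ ω, (∑ t ∈ s, a t * ε t ω) ^ 4 ∂μ) ≤ 4 * √K * ∑ t ∈ s, a t ^ 2 := by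
  have hinc (j : ι) (s : Finset ι) (hj : j ∉ s) (ω : Ω) :
      ∑ t ∈ insert j s, a t * ε t ω - ∑ t ∈ s, a t * ε t ω = a j * ε j ω := by
    rw [Finset.sum_insert hj, add_sub_cancel_right]
  have h := sqrt_integral_pow_four_le_of_orthogonal_increments (μ := μ)
    (F := fun s ω => ∑ t ∈ s, a t * ε t ω) (b := fun j => √K * a j ^ 2)
    (fun s => memLp_finsetSum s fun t _ => (hL4 t).const_mul (a t)) (by ext; simp)
    (fun j s hj => by
      simp only [hinc j s hj]
      rw [hind.integral_mul_of_dependsOn hmeas hj (F := fun x => (∑ t ∈ s, a t * x t) ^ 3)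
        (by fun_prop) (fun x y hxy => by simp +contextual [hxy])
        (measurable_const_mul (a j)), integral_const_mul, hmean, mul_zero, mul_zero])
    (fun j s hj => by
      simp only [hinc j s hj, sqrt_integral_const_mul_pow_four]
      rw [mul_comm]
      gcongr
      exact hK j)
    s
  rwa [mul_assoc, Finset.mul_sum]

variable {A : Matrix ι ι ℝ}

theorem integral_centeredQuadForm_pow_three_mul_increment [IsProbabilityMeasure μ] (hA : A.IsSymm)
    (hind : iIndepFun ε μ) (hmeas : ∀ i, Measurable (ε i)) (hL8 : ∀ i, MemLp (ε i) 8 μ)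
    (hmean : ∀ i, ∫ ω, ε i ω ∂μ = 0) (hvar : ∀ i, ∫ ω, ε i ω ^ 2 ∂μ = 1)
    {s : Finset ι} {j : ι} (hj : j ∉ s) :
    ∫ ω, centeredQuadForm A s (ε · ω) ^ 3 *
      (centeredQuadForm A (insert j s) (ε · ω) - centeredQuadForm A s (ε · ω)) ∂μ = 0 := by
  have hZ := memLp_centeredQuadForm hL8 A s
  have hε2 : MemLp (fun ω => ε j ω ^ 2) 4 μ := by simpa [sq] using (hL8 j).mul' (hL8 j)
  have hsq : MemLp (fun ω => ε j ω ^ 2 - 1) 4 μ := hε2.sub (memLp_const 1)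
  have hlin : MemLp (fun ω => (∑ t ∈ s, A j t * ε t ω) * ε j ω) 4 μ :=
    (hL8 j).mul' (memLp_finsetSum s fun t _ => (hL8 t).const_mul (A j t))
  have hsplit : ∀ ω, centeredQuadForm A s (ε · ω) ^ 3 *
      (centeredQuadForm A (insert j s) (ε · ω) - centeredQuadForm A s (ε · ω)) =
      A j j * (centeredQuadForm A s (ε · ω) ^ 3 * (ε j ω ^ 2 - 1)) +
        2 * ((centeredQuadForm A s (ε · ω) ^ 3 * ∑ t ∈ s, A j t * ε t ω) * ε j ω) := fun ω => by
    rw [centeredQuadForm_insert hA hj]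
    ring
  simp only [hsplit]
  rw [integral_add ((hZ.integrable_pow_three_mul hsq).const_mul _)
      (by simpa [mul_assoc] using (hZ.integrable_pow_three_mul hlin).const_mul 2),
    integral_const_mul, integral_const_mul,
    hind.integral_mul_of_dependsOn hmeas hj (F := fun x => centeredQuadForm A s x ^ 3)
      (ψ := fun y => y ^ 2 - 1) (by fun_prop)
      (fun x y h => by dsimp only; rw [dependsOn_centeredQuadForm A s h]) (by fun_prop),
    hind.integral_mul_of_dependsOn hmeas hj
      (F := fun x => centeredQuadForm A s x ^ 3 * ∑ t ∈ s, A j t * x t)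
      (ψ := fun y => y) (by fun_prop) (fun x y h => by
        dsimp only
        rw [dependsOn_centeredQuadForm A s h, Finset.sum_congr rfl fun t ht => by rw [h t ht]])
      measurable_id,
    integral_sub (hε2.integrable (by norm_num)) (integrable_const 1)]
  simp [hmean, hvar]

theorem sqrt_integral_increment_pow_four_le [IsProbabilityMeasure μ] (hA : A.IsSymm)
    (hind : iIndepFun ε μ) (hmeas : ∀ i, Measurable (ε i)) (hL8 : ∀ i, MemLp (ε i) 8 μ)
    (hmean : ∀ i, ∫ ω, ε i ω ∂μ = 0) {K : ℝ} (hK4 : ∀ i, ∫ ω, ε i ω ^ 4 ∂μ ≤ K)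
    (hK8 : ∀ i, ∫ ω, (ε i ω ^ 2 - 1) ^ 4 ∂μ ≤ K ^ 2) {s : Finset ι} {j : ι} (hj : j ∉ s) :
    √(∫ ω, (centeredQuadForm A (insert j s) (ε · ω) - centeredQuadForm A s (ε · ω)) ^ 4 ∂μ) ≤
      3 * K * (A j j ^ 2 + 16 * ∑ t ∈ s, A j t ^ 2) := by
  simp only [centeredQuadForm_insert hA hj, add_sub_cancel_left]
  have hK : 0 ≤ K := (integral_nonneg fun ω => by positivity).trans (hK4 j)
  have hL : MemLp (fun ω => ∑ t ∈ s, A j t * ε t ω) 8 μ :=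
    memLp_finsetSum s fun t _ => (hL8 t).const_mul (A j t)
  have hε2 : MemLp (fun ω => ε j ω ^ 2) 4 μ := by simpa [sq] using (hL8 j).mul' (hL8 j)
  have hdiag : √(∫ ω, (A j j * (ε j ω ^ 2 - 1)) ^ 4 ∂μ) ≤ A j j ^ 2 * K := by
    rw [sqrt_integral_const_mul_pow_four]
    gcongr
    exact Real.sqrt_le_iff.2 ⟨hK, hK8 j⟩
  have hoff : √(∫ ω, (2 * ε j ω * ∑ t ∈ s, A j t * ε t ω) ^ 4 ∂μ) ≤
      16 * K * ∑ t ∈ s, A j t ^ 2 := by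
    have hprod : ∫ ω, (ε j ω * ∑ t ∈ s, A j t * ε t ω) ^ 4 ∂μ =
        (∫ ω, (∑ t ∈ s, A j t * ε t ω) ^ 4 ∂μ) * ∫ ω, ε j ω ^ 4 ∂μ := by
      simp_rw [mul_pow, mul_comm (ε j _ ^ 4)]
      exact hind.integral_mul_of_dependsOn hmeas hj (F := fun x => (∑ t ∈ s, A j t * x t) ^ 4)
        (ψ := fun y => y ^ 4) (by fun_prop) (fun x y h => by simp +contextual [h]) (by fun_prop)
    have hlin := sqrt_integral_sum_mul_pow_four_le hind hmeas
      (fun i => (hL8 i).mono_exponent (by norm_num)) hmean hK4 (A j) s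
    calc √(∫ ω, (2 * ε j ω * ∑ t ∈ s, A j t * ε t ω) ^ 4 ∂μ)
        = 4 * (√(∫ ω, (∑ t ∈ s, A j t * ε t ω) ^ 4 ∂μ) * √(∫ ω, ε j ω ^ 4 ∂μ)) := by
          simp_rw [mul_assoc (2 : ℝ), sqrt_integral_const_mul_pow_four, hprod]
          rw [Real.sqrt_mul (integral_nonneg fun ω => by positivity)]
          norm_num
      _ ≤ 4 * ((4 * √K * ∑ t ∈ s, A j t ^ 2) * √K) := by
          gcongr
          exact hK4 j
      _ = 16 * K * ∑ t ∈ s, A j t ^ 2 := by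
          rw [show 4 * ((4 * √K * ∑ t ∈ s, A j t ^ 2) * √K) = 16 * (√K * √K) * ∑ t ∈ s, A j t ^ 2
            by ring, Real.mul_self_sqrt hK]
  calc _ ≤ 3 * (√(∫ ω, (A j j * (ε j ω ^ 2 - 1)) ^ 4 ∂μ) +
        √(∫ ω, (2 * ε j ω * ∑ t ∈ s, A j t * ε t ω) ^ 4 ∂μ)) :=
        sqrt_integral_add_pow_four_le ((hε2.sub (memLp_const 1)).const_mul _)
          (hL.mul' ((hL8 j).const_mul 2))
    _ ≤ 3 * (A j j ^ 2 * K + 16 * K * ∑ t ∈ s, A j t ^ 2) := by gcongr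
    _ = 3 * K * (A j j ^ 2 + 16 * ∑ t ∈ s, A j t ^ 2) := by ring

theorem sqrt_integral_centeredQuadForm_pow_four_le [IsProbabilityMeasure μ] [Fintype ι]
    (hA : A.IsSymm) (hind : iIndepFun ε μ) (hmeas : ∀ i, Measurable (ε i))
    (hL8 : ∀ i, MemLp (ε i) 8 μ)
    (hmean : ∀ i, ∫ ω, ε i ω ∂μ = 0) (hvar : ∀ i, ∫ ω, ε i ω ^ 2 ∂μ = 1) {K : ℝ}
    (hK4 : ∀ i, ∫ ω, ε i ω ^ 4 ∂μ ≤ K) (hK8 : ∀ i, ∫ ω, (ε i ω ^ 2 - 1) ^ 4 ∂μ ≤ K ^ 2) :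
    √(∫ ω, centeredQuadForm A Finset.univ (ε · ω) ^ 4 ∂μ) ≤ 192 * K * ∑ u, ∑ t, A u t ^ 2 := by
  have hstep (j : ι) (s : Finset ι) (hj : j ∉ s) :
      √(∫ ω, (centeredQuadForm A (insert j s) (ε · ω) - centeredQuadForm A s (ε · ω)) ^ 4 ∂μ) ≤
        48 * K * ∑ t, A j t ^ 2 := by
    have hK : 0 ≤ K := (integral_nonneg fun ω => by positivity).trans (hK4 j)
    have hrow : A j j ^ 2 + ∑ t ∈ s, A j t ^ 2 ≤ ∑ t, A j t ^ 2 :=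
      calc A j j ^ 2 + ∑ t ∈ s, A j t ^ 2 = ∑ t ∈ insert j s, A j t ^ 2 :=
            (Finset.sum_insert hj (f := fun t => A j t ^ 2)).symm
        _ ≤ ∑ t, A j t ^ 2 := Finset.sum_le_sum_of_subset_of_nonneg (Finset.subset_univ _)
            fun t _ _ => sq_nonneg _
    refine (sqrt_integral_increment_pow_four_le hA hind hmeas hL8 hmean hK4 hK8 hj).trans ?_
    nlinarith [mul_nonneg hK (sq_nonneg (A j j)), mul_le_mul_of_nonneg_left hrow hK]
  have h := sqrt_integral_pow_four_le_of_orthogonal_increments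
    (F := fun s ω => centeredQuadForm A s (ε · ω)) (b := fun j => 48 * K * ∑ t, A j t ^ 2)
    (memLp_centeredQuadForm hL8 A) (by ext; simp [centeredQuadForm])
    (fun j s hj =>
      integral_centeredQuadForm_pow_three_mul_increment hA hind hmeas hL8 hmean hvar hj)
    hstep Finset.univ
  refine h.trans_eq ?_
  rw [Finset.mul_sum, Finset.mul_sum]
  exact Finset.sum_congr rfl fun i _ => by ring

end IndependentCoordinates

/-- Fourth-moment bound for quadratic forms: there is a constant `C` depending only on `κ₈`
such that for any independent standardized `ε_i` with eighth moments bounded by `κ₈` and any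
real symmetric matrix `A`, `E[(ε'Aε - tr A)⁴] ≤ C ‖A‖_F⁴`. -/
theorem stmt_16 (κ₈ : ℝ) :
    ∃ C : ℝ, ∀ (Ω : Type) (_ : MeasureSpace Ω),
      IsProbabilityMeasure (ℙ : Measure Ω) →
      ∀ (n : ℕ) (ε : Fin n → Ω → ℝ) (A : Matrix (Fin n) (Fin n) ℝ),
        A.IsSymm →
        (∀ i, Measurable (ε i)) →
        iIndepFun ε ℙ →
        (∀ i, MemLp (ε i) 8 ℙ) →
        (∀ i, ∫ ω, ε i ω = 0) →
        (∀ i, ∫ ω, (ε i ω) ^ 2 = 1) →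
        (∀ i, ∫ ω, (ε i ω) ^ 8 ≤ κ₈) →
        (∫ ω, ((∑ s, ∑ t, A s t * ε s ω * ε t ω) - A.trace) ^ 4) ≤
          C * Real.sqrt ((Aᵀ * A).trace) ^ 4 := by
  set K := 8 * (|κ₈| + 1)
  refine ⟨(192 * K) ^ 2, fun Ω _ _ n ε A hA hmeas hind hL8 hmean hvar hκ => ?_⟩
  have hK4 (i : Fin n) : ∫ ω, ε i ω ^ 4 ≤ K :=
    (integral_pow_four_le_one_add_integral_pow_eight (hL8 i)).trans
      (by linarith [hκ i, le_abs_self κ₈, abs_nonneg κ₈])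
  have hK8 (i : Fin n) : ∫ ω, (ε i ω ^ 2 - 1) ^ 4 ≤ K ^ 2 :=
    (integral_sq_sub_one_pow_four_le (hL8 i)).trans
      (by nlinarith [hκ i, le_abs_self κ₈, abs_nonneg κ₈])
  have hquad := sqrt_integral_centeredQuadForm_pow_four_le hA hind hmeas hL8 hmean hvar hK4 hK8
  have hfrob : (Aᵀ * A).trace = ∑ u, ∑ t, A u t ^ 2 := by
    simp only [Matrix.trace, Matrix.diag_apply, Matrix.mul_apply, Matrix.transpose_apply, sq]
    exact Finset.sum_comm
  change ∫ ω, centeredQuadForm A Finset.univ (ε · ω) ^ 4 ≤ _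
  rw [hfrob]
  calc ∫ ω, centeredQuadForm A Finset.univ (ε · ω) ^ 4
      = √(∫ ω, centeredQuadForm A Finset.univ (ε · ω) ^ 4) ^ 2 :=
        (Real.sq_sqrt (integral_nonneg fun ω => by positivity)).symm
    _ ≤ (192 * K * ∑ u, ∑ t, A u t ^ 2) ^ 2 := by gcongr
    _ = (192 * K) ^ 2 * √(∑ u, ∑ t, A u t ^ 2) ^ 4 := by
        rw [show √(∑ u, ∑ t, A u t ^ 2) ^ 4 = (√(∑ u, ∑ t, A u t ^ 2) ^ 2) ^ 2 by ring,
          Real.sq_sqrt (by positivity)]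
        ring
end
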